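/- Let H be a strongly primary monoid that is not half-factorial. Then ρ(H) is the only limit point of the set {ρ(a) : a ∈ H} of elasticities: there is no real number r with 1 ≤ r < ρ(H) which is a limit point of {ρ(a) : a ∈ H}. -/

import Mathlib

open Filter Topology

/-- The set of factorization lengths of `a`: the set of all `k` such that `a` is a
product of `k` atoms (irreducibles); by convention it is `{0}` for units. -/
noncomputable def lengthSet (H : Type*) [CommMonoid H] (a : H) : Set ℕ :=
  open Classical in
  if IsUnit a then {0}
  else {k | ∃ f : Fin k → H, (∀ i, Irreducible (f i)) ∧ a = ∏ i, f i}

/-- The elasticity `ρ(a) = max L(a) / min L(a)` of an element of a BF-monoid,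
with `ρ(a) = 1` for units. -/
noncomputable def elasticity (H : Type*) [CommMonoid H] (a : H) : ℝ :=
  open Classical in
  if IsUnit a then 1
  else ((sSup (lengthSet H a) : ℕ) : ℝ) / ((sInf (lengthSet H a) : ℕ) : ℝ)

/-- The elasticity `ρ(H) = sup {ρ(a) : a ∈ H} ∈ ℝ≥1 ∪ {∞}` of the monoid `H`. -/
noncomputable def monoidElasticity (H : Type*) [CommMonoid H] : EReal :=
  ⨆ a : H, ((elasticity H a : ℝ) : EReal)

/-- The set `R̄(H)` of asymptotic elasticities `ρ̄(a) = lim_{n → ∞} ρ(aⁿ)`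
of nonunits `a ∈ H` (membership requires the limit to exist). -/
def asympSet (H : Type*) [CommMonoid H] : Set EReal :=
  {r | ∃ a : H, ¬ IsUnit a ∧
    Tendsto (fun n : ℕ => ((elasticity H (a ^ n) : ℝ) : EReal)) atTop (nhds r)}

/-- `H` is locally finitely generated: for every `a ∈ H` there are only finitely many
atoms, up to associates, dividing some power of `a`. -/
def LocallyFinitelyGenerated (H : Type*) [CommMonoid H] : Prop :=
  ∀ a : H, {u : Associates H | Irreducible u ∧ ∃ n : ℕ, u ∣ Associates.mk (a ^ n)}.Finite

/-- `H` is a BF-monoid: atomic (every nonunit has a factorization into atoms) and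
all sets of lengths are finite. -/
def IsBFMonoid (H : Type*) [CommMonoid H] : Prop :=
  (∀ a : H, ¬ IsUnit a → (lengthSet H a).Nonempty) ∧ ∀ a : H, (lengthSet H a).Finite

/-- `(k, ℓ) ≠ (0,0)` is a nice pair with respect to `(a, b)` if
`max L((aᵏbˡ)ᵗ) = t · max L(aᵏbˡ)` and `min L((aᵏbˡ)ᵗ) = t · min L(aᵏbˡ)` for all `t ∈ ℕ`. -/
def IsNicePair (H : Type*) [CommMonoid H] (a b : H) (k ℓ : ℕ) : Prop :=
  ¬ (k = 0 ∧ ℓ = 0) ∧ ∀ t : ℕ, 0 < t →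
    sSup (lengthSet H ((a ^ k * b ^ ℓ) ^ t)) = t * sSup (lengthSet H (a ^ k * b ^ ℓ)) ∧
    sInf (lengthSet H ((a ^ k * b ^ ℓ) ^ t)) = t * sInf (lengthSet H (a ^ k * b ^ ℓ))

/-- `H` is strongly primary: `H ≠ H^×` and for every nonunit `a` there is `n ∈ ℕ`
such that every product of `n` nonunits of `H` is divisible by `a`. -/
def StronglyPrimary (H : Type*) [CommMonoid H] : Prop :=
  (∃ a : H, ¬ IsUnit a) ∧ ∀ a : H, ¬ IsUnit a → ∃ n : ℕ, 0 < n ∧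
    ∀ f : Fin n → H, (∀ i, ¬ IsUnit (f i)) → a ∣ ∏ i, f i

/-- `H` is half-factorial: atomic and `|L(a)| = 1` for every `a ∈ H`. -/
def IsHalfFactorial (H : Type*) [CommMonoid H] : Prop :=
  ∀ a : H, ∃ k : ℕ, lengthSet H a = {k}

/-! Write `M(a) = max L(a)` and `m(a) = min L(a)`. Fix a nonunit `c` with `ρ(c) > s > r` and an
`n` such that `c` divides every product of `n` nonunits. Peeling copies of `c` off `a` one at a
time gives `a = cᵏ b` with `m(b) ≤ n`, so `k M(c) ≤ M(a)` and `m(a) ≤ k m(c) + n` by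
superadditivity of `M` and subadditivity of `m`. Hence `ρ(a) ≥ k M(c) / (k m(c) + n) ≥ s` as soon
as `m(a)` is large, so the elasticities below `s` come from elements with `m(a)` and
`M(a) < s m(a)` bounded. They form a finite set, which has no accumulation point. -/

section Lengths

variable {H : Type*} [CommMonoid H]

lemma lengthSet_of_isUnit {a : H} (ha : IsUnit a) : lengthSet H a = {0} := by
  simp [lengthSet, ha]

lemma elasticity_of_not_isUnit {a : H} (ha : ¬ IsUnit a) :
    elasticity H a = (sSup (lengthSet H a) : ℕ) / (sInf (lengthSet H a) : ℕ) := by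
  simp [elasticity, ha]

lemma mem_lengthSet_iff_exists_list {a : H} (ha : ¬ IsUnit a) {k : ℕ} :
    k ∈ lengthSet H a ↔
      ∃ l : List H, (∀ x ∈ l, Irreducible x) ∧ l.prod = a ∧ l.length = k := by
  simp only [lengthSet, if_neg ha, Set.mem_ofPred_eq]
  constructor
  · rintro ⟨f, hf, rfl⟩
    exact ⟨List.ofFn f, by simpa [List.mem_ofFn] using hf, Fin.prod_ofFn f, List.length_ofFn⟩
  · rintro ⟨l, hl, rfl, rfl⟩
    exact ⟨fun i => l[i.1], fun i => hl _ (List.getElem_mem _), (Fin.prod_univ_getElem l).symm⟩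

lemma zero_notMem_lengthSet {a : H} (ha : ¬ IsUnit a) : 0 ∉ lengthSet H a := by
  rw [mem_lengthSet_iff_exists_list ha]
  rintro ⟨l, -, rfl, hl⟩
  simp [List.length_eq_zero_iff.mp hl] at ha

lemma add_mem_lengthSet_mul {a b : H} (ha : ¬ IsUnit a) (hb : ¬ IsUnit b) {k ℓ : ℕ}
    (hk : k ∈ lengthSet H a) (hℓ : ℓ ∈ lengthSet H b) :
    k + ℓ ∈ lengthSet H (a * b) := by
  obtain ⟨l₁, hl₁, rfl, rfl⟩ := (mem_lengthSet_iff_exists_list ha).mp hk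
  obtain ⟨l₂, hl₂, rfl, rfl⟩ := (mem_lengthSet_iff_exists_list hb).mp hℓ
  refine (mem_lengthSet_iff_exists_list fun h => ha (isUnit_of_mul_isUnit_left h)).mpr
    ⟨l₁ ++ l₂, ?_, List.prod_append .., List.length_append⟩
  simpa [or_imp, forall_and] using ⟨hl₁, hl₂⟩

lemma lengthSet_subset_lengthSet_mul_unit {a u : H} (ha : ¬ IsUnit a) (hu : IsUnit u) :
    lengthSet H a ⊆ lengthSet H (a * u) := by
  intro k hk
  obtain ⟨l, hl, rfl, rfl⟩ := (mem_lengthSet_iff_exists_list ha).mp hk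
  obtain ⟨x, l, rfl⟩ := List.exists_cons_of_ne_nil (show l ≠ [] by rintro rfl; simp at ha)
  refine (mem_lengthSet_iff_exists_list fun h => ha (isUnit_of_mul_isUnit_left h)).mpr
    ⟨x * u :: l, ?_, by simp [mul_right_comm], by simp⟩
  simp only [List.mem_cons, forall_eq_or_imp] at hl ⊢
  exact ⟨(associated_mul_unit_right x u hu).irreducible hl.1, hl.2⟩

lemma lengthSet_mul_unit (a : H) {u : H} (hu : IsUnit u) : lengthSet H (a * u) = lengthSet H a := by
  by_cases ha : IsUnit a
  · rw [lengthSet_of_isUnit ha, lengthSet_of_isUnit (ha.mul hu)]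
  refine Set.Subset.antisymm ?_ (lengthSet_subset_lengthSet_mul_unit ha hu)
  simpa [mul_assoc] using lengthSet_subset_lengthSet_mul_unit (a := a * u) (u := ↑hu.unit⁻¹)
    (fun h => ha (isUnit_of_mul_isUnit_left h)) (Units.isUnit _)

end Lengths

section Factorizations

variable {H : Type*} [CancelCommMonoid H]

lemma length_le_of_forall_dvd_prod {a : H} {n : ℕ}
    (hn : ∀ l : List H, (∀ x ∈ l, ¬ IsUnit x) → n ≤ l.length → a ∣ l.prod)
    {l : List H} (hl : ∀ x ∈ l, ¬ IsUnit x) (hla : l.prod = a) : l.length ≤ n := by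
  by_contra! hlen
  obtain ⟨t, ht⟩ := hn (l.take n) (fun x hx => hl x (List.mem_of_mem_take hx)) (by simp; omega)
  have hunit : IsUnit (l.drop n).prod := by
    refine IsUnit.of_mul_eq_one t (mul_left_cancel (a := a) ?_)
    rw [mul_one, mul_left_comm, ← ht, mul_comm, List.prod_take_mul_prod_drop, hla]
  obtain ⟨x, hx⟩ := List.exists_mem_of_length_pos (by simp; omega : 0 < (l.drop n).length)
  exact hl x (List.mem_of_mem_drop hx) (List.prod_isUnit_iff.mp hunit x hx)

/-- A factorization of `a` into the largest possible number of nonunits is a factorization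
into atoms. -/
lemma lengthSet_nonempty_of_forall_dvd_prod {a : H} (ha : ¬ IsUnit a) {n : ℕ}
    (hn : ∀ l : List H, (∀ x ∈ l, ¬ IsUnit x) → n ≤ l.length → a ∣ l.prod) :
    (lengthSet H a).Nonempty := by
  classical
  set K : Set ℕ := {k | ∃ l : List H, (∀ x ∈ l, ¬ IsUnit x) ∧ l.prod = a ∧ l.length = k}
  have hK : BddAbove K :=
    ⟨n, by rintro _ ⟨l, hl, hla, rfl⟩; exact length_le_of_forall_dvd_prod hn hl hla⟩
  obtain ⟨l, hl, hla, hlen⟩ : sSup K ∈ K :=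
    Nat.sSup_mem ⟨1, [a], by simpa using ha, by simp, rfl⟩ hK
  refine ⟨_, (mem_lengthSet_iff_exists_list ha).mpr ⟨l, fun x hx => ?_, hla, rfl⟩⟩
  refine irreducible_iff.mpr ⟨hl x hx, fun b c hbc => ?_⟩
  by_contra! hbc'
  have hlonger : l.length + 1 ∈ K := by
    refine ⟨b :: c :: l.erase x, ?_, ?_, ?_⟩
    · simp only [List.mem_cons, forall_eq_or_imp]
      exact ⟨hbc'.1, hbc'.2, fun y hy => hl y (List.mem_of_mem_erase hy)⟩
    · rw [← hla, ← List.prod_erase hx, hbc]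
      simp [mul_assoc]
    · simp [List.length_erase_of_mem hx, Nat.sub_add_cancel (List.length_pos_of_mem hx)]
  have := le_csSup hK hlonger
  omega

lemma StronglyPrimary.exists_forall_dvd_prod (hsp : StronglyPrimary H) {a : H}
    (ha : ¬ IsUnit a) :
    ∃ n : ℕ, ∀ l : List H, (∀ x ∈ l, ¬ IsUnit x) → n ≤ l.length → a ∣ l.prod := by
  obtain ⟨n, -, hn⟩ := hsp.2 a ha
  refine ⟨n, fun l hl hlen => ?_⟩
  have htake : ∏ i : Fin n, l[i.1] = (l.take n).prod := by
    rw [← Fin.prod_univ_getElem (l.take n),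
      ← Fin.prod_congr' _ (by simpa using hlen : (l.take n).length = n)]
    simp
  rw [← List.prod_take_mul_prod_drop l n, ← htake]
  exact (hn _ fun i => hl _ (List.getElem_mem _)).mul_right _

theorem StronglyPrimary.isBFMonoid (hsp : StronglyPrimary H) : IsBFMonoid H := by
  refine ⟨fun a ha => ?_, fun a => ?_⟩
  · obtain ⟨n, hn⟩ := hsp.exists_forall_dvd_prod ha
    exact lengthSet_nonempty_of_forall_dvd_prod ha hn
  · by_cases ha : IsUnit a
    · simp [lengthSet_of_isUnit ha]
    obtain ⟨n, hn⟩ := hsp.exists_forall_dvd_prod ha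
    refine (Set.finite_Iic n).subset fun k hk => ?_
    obtain ⟨l, hl, hla, rfl⟩ := (mem_lengthSet_iff_exists_list ha).mp hk
    exact length_le_of_forall_dvd_prod hn (fun x hx => (hl x hx).not_isUnit) hla

end Factorizations

namespace IsBFMonoid

variable {H : Type*} [CommMonoid H] (hbf : IsBFMonoid H)
include hbf

lemma sSup_mem_lengthSet {a : H} (ha : ¬ IsUnit a) : sSup (lengthSet H a) ∈ lengthSet H a :=
  Nat.sSup_mem (hbf.1 a ha) (hbf.2 a).bddAbove

lemma sInf_mem_lengthSet {a : H} (ha : ¬ IsUnit a) : sInf (lengthSet H a) ∈ lengthSet H a :=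
  Nat.sInf_mem (hbf.1 a ha)

lemma sInf_lengthSet_pos {a : H} (ha : ¬ IsUnit a) : 0 < sInf (lengthSet H a) :=
  Nat.pos_of_ne_zero fun h => zero_notMem_lengthSet ha (h ▸ hbf.sInf_mem_lengthSet ha)

lemma sInf_lengthSet_le_sSup {a : H} (ha : ¬ IsUnit a) :
    sInf (lengthSet H a) ≤ sSup (lengthSet H a) :=
  le_csSup (hbf.2 a).bddAbove (hbf.sInf_mem_lengthSet ha)

lemma sSup_lengthSet_add_le (a b : H) :
    sSup (lengthSet H a) + sSup (lengthSet H b) ≤ sSup (lengthSet H (a * b)) := by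
  by_cases ha : IsUnit a
  · simp [lengthSet_of_isUnit ha, mul_comm a, lengthSet_mul_unit b ha]
  by_cases hb : IsUnit b
  · simp [lengthSet_of_isUnit hb, lengthSet_mul_unit a hb]
  exact le_csSup (hbf.2 _).bddAbove
    (add_mem_lengthSet_mul ha hb (hbf.sSup_mem_lengthSet ha) (hbf.sSup_mem_lengthSet hb))

lemma sInf_lengthSet_mul_le (a b : H) :
    sInf (lengthSet H (a * b)) ≤ sInf (lengthSet H a) + sInf (lengthSet H b) := by
  by_cases ha : IsUnit a
  · simp [lengthSet_of_isUnit ha, mul_comm a, lengthSet_mul_unit b ha]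
  by_cases hb : IsUnit b
  · simp [lengthSet_of_isUnit hb, lengthSet_mul_unit a hb]
  exact Nat.sInf_le
    (add_mem_lengthSet_mul ha hb (hbf.sInf_mem_lengthSet ha) (hbf.sInf_mem_lengthSet hb))

lemma exists_mul_sSup_le_and_sInf_le {c : H} (hc : ¬ IsUnit c) {n : ℕ}
    (hn : ∀ l : List H, (∀ x ∈ l, ¬ IsUnit x) → n ≤ l.length → c ∣ l.prod) (a : H) :
    ∃ k : ℕ, k * sSup (lengthSet H c) ≤ sSup (lengthSet H a) ∧
      sInf (lengthSet H a) ≤ k * sInf (lengthSet H c) + n := by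
  induction hM : sSup (lengthSet H a) using Nat.strong_induction_on generalizing a with
  | _ M ih =>
  by_cases hsmall : sInf (lengthSet H a) ≤ n
  · exact ⟨0, by simp, by simpa using hsmall⟩
  have ha : ¬ IsUnit a := fun hu => by simp [lengthSet_of_isUnit hu] at hsmall
  obtain ⟨l, hl, hla, hlen⟩ :=
    (mem_lengthSet_iff_exists_list ha).mp (hbf.sInf_mem_lengthSet ha)
  obtain ⟨b, rfl⟩ : c ∣ a := hla ▸ hn l (fun x hx => (hl x hx).not_isUnit) (by omega)
  have hsup := hbf.sSup_lengthSet_add_le c b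
  have hinf := hbf.sInf_lengthSet_mul_le c b
  have hc₀ := (hbf.sInf_lengthSet_pos hc).trans_le (hbf.sInf_lengthSet_le_sSup hc)
  obtain ⟨k, hkM, hkm⟩ := ih _ (by omega) b rfl
  refine ⟨k + 1, ?_, ?_⟩ <;> rw [add_one_mul] <;> omega

lemma exists_forall_le_elasticity {c : H} (hc : ¬ IsUnit c) {n : ℕ}
    (hn : ∀ l : List H, (∀ x ∈ l, ¬ IsUnit x) → n ≤ l.length → c ∣ l.prod)
    {s : ℝ} (hs : s < elasticity H c) :
    ∃ B : ℕ, ∀ a : H, B ≤ sInf (lengthSet H a) → s ≤ elasticity H a := by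
  set M : ℕ := sSup (lengthSet H c)
  set m : ℕ := sInf (lengthSet H c)
  have hm₀ : 0 < m := hbf.sInf_lengthSet_pos hc
  have hm : (0 : ℝ) < m := by exact_mod_cast hm₀
  have hgap : 0 < M - s * m := by
    rw [elasticity_of_not_isUnit hc, lt_div_iff₀ hm] at hs
    linarith
  -- `K` copies of `c` already push the elasticity above `s`
  set K : ℕ := ⌈s * n / (M - s * m)⌉₊
  have hK : s * n ≤ K * (M - s * m) := (div_le_iff₀ hgap).mp (Nat.le_ceil _)
  refine ⟨m * K + n + 1, fun a ha => ?_⟩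
  have ha' : ¬ IsUnit a := fun hu => by simp [lengthSet_of_isUnit hu] at ha
  obtain ⟨k, hkM, hkm⟩ : ∃ k : ℕ, k * M ≤ sSup (lengthSet H a) ∧
      sInf (lengthSet H a) ≤ k * m + n :=
    hbf.exists_mul_sSup_le_and_sInf_le hc hn a
  have hKk : K ≤ k := by
    by_contra! h
    nlinarith
  have hma : (0 : ℝ) < (sInf (lengthSet H a) : ℕ) := by
    exact_mod_cast hbf.sInf_lengthSet_pos ha'
  have hkM' : (k : ℝ) * M ≤ (sSup (lengthSet H a) : ℕ) := by exact_mod_cast hkM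
  have hkm' : ((sInf (lengthSet H a) : ℕ) : ℝ) ≤ k * m + n := by exact_mod_cast hkm
  have hKk' : (K : ℝ) ≤ k := by exact_mod_cast hKk
  rw [elasticity_of_not_isUnit ha', le_div_iff₀ hma]
  have hkey : s * (k * m + n) ≤ k * M := by
    nlinarith [mul_le_mul_of_nonneg_right hKk' hgap.le]
  rcases le_or_gt 0 s with hs₀ | hs₀
  · calc s * _ ≤ s * (k * m + n) := by gcongr
      _ ≤ k * M := hkey
      _ ≤ _ := hkM'
  · exact (mul_neg_of_neg_of_pos hs₀ hma).le.trans (Nat.cast_nonneg _)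

lemma finite_image_elasticity (B : ℕ) (s : ℝ) :
    (elasticity H '' {a | sInf (lengthSet H a) < B ∧ elasticity H a < s}).Finite := by
  refine (((Set.finite_Iic ⌈s * B⌉₊).prod (Set.finite_Iio B)).image
    (fun p : ℕ × ℕ => (p.1 : ℝ) / p.2)).insert 1 |>.subset ?_
  rintro _ ⟨a, ⟨haB, has⟩, rfl⟩
  by_cases ha : IsUnit a
  · simp [elasticity, ha]
  refine Or.inr ⟨(sSup (lengthSet H a), sInf (lengthSet H a)), ⟨?_, haB⟩,
    (elasticity_of_not_isUnit ha).symm⟩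
  have hma : (0 : ℝ) < (sInf (lengthSet H a) : ℕ) := by exact_mod_cast hbf.sInf_lengthSet_pos ha
  have hmB : ((sInf (lengthSet H a) : ℕ) : ℝ) ≤ B := by exact_mod_cast haB.le
  rw [elasticity_of_not_isUnit ha, div_lt_iff₀ hma] at has
  have hs : 0 < s := pos_of_mul_pos_left ((Nat.cast_nonneg _).trans_lt has) hma.le
  have hM : ((sSup (lengthSet H a) : ℕ) : ℝ) ≤ s * B := by nlinarith
  exact Nat.cast_le.mp (hM.trans (Nat.le_ceil _))

end IsBFMonoid

theorem statement17_general (H : Type*) [CancelCommMonoid H]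
    (hsp : StronglyPrimary H) :
    ¬ ∃ r : ℝ, 1 ≤ r ∧ ((r : EReal) < monoidElasticity H) ∧
      AccPt r (Filter.principal {x : ℝ | ∃ a : H, elasticity H a = x}) := by
  rintro ⟨r, hr, hrρ, hacc⟩
  obtain ⟨c, hrc⟩ : ∃ c, r < elasticity H c := by
    simpa [monoidElasticity, lt_iSup_iff] using hrρ
  have hc : ¬ IsUnit c := fun hu => by simp [elasticity, hu] at hrc; linarith
  obtain ⟨s, hrs, hsc⟩ := exists_between hrc
  obtain ⟨n, hn⟩ := hsp.exists_forall_dvd_prod hc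
  have hbf := hsp.isBFMonoid
  obtain ⟨B, hB⟩ := hbf.exists_forall_le_elasticity hc hn hsc
  have hsub : Set.Iio s ∩ {x | ∃ a : H, elasticity H a = x} ⊆
      elasticity H '' {a | sInf (lengthSet H a) < B ∧ elasticity H a < s} := by
    rintro _ ⟨hxs, a, rfl⟩
    exact ⟨a, ⟨not_le.mp fun h => (hB a h).not_gt hxs, hxs⟩, rfl⟩
  exact ((hbf.finite_image_elasticity B s).subset hsub).not_infinite
    (Set.Infinite.of_accPt (hacc.nhds_inter (Iio_mem_nhds hrs)))

/-- If `H` is strongly primary and not half-factorial, then `ρ(H)` is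
the only limit point of the set of elasticities of `H`: no real `r` with `1 ≤ r < ρ(H)`
is an accumulation point of `{ρ(a) : a ∈ H}`. -/
theorem statement17 (H : Type*) [CancelCommMonoid H]
    (hsp : StronglyPrimary H) (hhf : ¬ IsHalfFactorial H) :
    ¬ ∃ r : ℝ, 1 ≤ r ∧ ((r : EReal) < monoidElasticity H) ∧
      AccPt r (Filter.principal {x : ℝ | ∃ a : H, elasticity H a = x}) :=
  statement17_general H hsp
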